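/- Let n be a finite index type, let T and T′ be n×n diagonal complex matrices, let Q be an invertible n×n complex matrix with Q·T = T′·Q, and let M, M′ be n×n complex matrices with Q·M = M′·Q. Then for every c ∈ ℂ, the sum of the diagonal entries M_{x,x} over all indices x with T_{x,x} = c equals the sum of the diagonal entries M′_{a,a} over all indices a with T′_{a,a} = c. -/

import Mathlib

open Matrix

/-! If `Q` intertwines the diagonal matrices `T` and `T'`, then `Q x a ≠ 0` forces
`T a a = T' x x`, so `Q` also intertwines the diagonal projections onto the `c`-eigenspaces.
Multiplying `Q M = M' Q` by these projections gives a similarity between `E M` and `E' M'`,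
and the two sums are the traces of these matrices. -/

namespace Matrix

variable {m n R : Type*} [Fintype m] [Fintype n] [DecidableEq m] [DecidableEq n]

theorem eq_of_mul_diagonal_eq_diagonal_mul [CommRing R] [NoZeroDivisors R]
    {Q : Matrix m n R} {d : n → R} {d' : m → R} (h : Q * diagonal d = diagonal d' * Q)
    {i : m} {j : n} (hij : Q i j ≠ 0) : d j = d' i := by
  have hentry := congr_fun (congr_fun h i) j
  rw [mul_diagonal, diagonal_mul, mul_comm] at hentry
  exact mul_right_cancel₀ hij hentry

theorem mul_diagonal_comp_eq_diagonal_comp_mul [CommRing R] [NoZeroDivisors R]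
    {Q : Matrix m n R} {d : n → R} {d' : m → R} (f : R → R)
    (h : Q * diagonal d = diagonal d' * Q) :
    Q * diagonal (f ∘ d) = diagonal (f ∘ d') * Q := by
  ext i j
  rw [mul_diagonal, diagonal_mul]
  by_cases hij : Q i j = 0
  · simp [hij]
  · simp [eq_of_mul_diagonal_eq_diagonal_mul h hij, mul_comm]

theorem trace_eq_of_mul_eq_mul [CommRing R] {Q A B : Matrix n n R} (hQ : IsUnit Q.det)
    (h : Q * A = B * Q) : trace A = trace B :=
  calc trace A = trace (Q⁻¹ * (Q * A)) := by rw [← Matrix.mul_assoc, nonsing_inv_mul Q hQ, one_mul]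
    _ = trace (Q⁻¹ * B * Q) := by rw [h, Matrix.mul_assoc]
    _ = trace B := trace_conj' ((isUnit_iff_isUnit_det Q).mpr hQ) B

theorem sum_filter_diag_eq_trace_diagonal_mul [Semiring R] (p : n → Prop) [DecidablePred p]
    (A : Matrix n n R) :
    ∑ x ∈ Finset.univ.filter p, A x x = trace (diagonal (fun x => if p x then 1 else 0) * A) := by
  simp only [trace, diag_apply, diagonal_mul, ite_mul, one_mul, zero_mul, Finset.sum_filter]

end Matrix

theorem stmt_8 {n : Type*} [Fintype n] [DecidableEq n]
    (T T' Q M M' : Matrix n n ℂ)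
    (hT : T.IsDiag) (hT' : T'.IsDiag)
    (hQ : IsUnit Q.det) (hQT : Q * T = T' * Q)
    (hQM : Q * M = M' * Q) (c : ℂ) :
    ∑ x ∈ Finset.univ.filter (fun x : n => T x x = c), M x x =
      ∑ a ∈ Finset.univ.filter (fun a : n => T' a a = c), M' a a := by
  have hE : Q * diagonal (fun x => if T x x = c then 1 else 0) =
      diagonal (fun a => if T' a a = c then 1 else 0) * Q :=
    mul_diagonal_comp_eq_diagonal_comp_mul (d := T.diag) (d' := T'.diag)
      (fun z => if z = c then 1 else 0) (by rwa [hT.diagonal_diag, hT'.diagonal_diag])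
  rw [sum_filter_diag_eq_trace_diagonal_mul, sum_filter_diag_eq_trace_diagonal_mul]
  refine trace_eq_of_mul_eq_mul hQ ?_
  rw [← Matrix.mul_assoc, hE, Matrix.mul_assoc, hQM, Matrix.mul_assoc]
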